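/- Singular angle (SRG phase) nonsingularity: define for A ∈ ℂ^{n×n} the maximal singular angle φ_max(A) := sup{ arccos(Re⟨x,Ax⟩/(‖x‖‖Ax‖)) : x ≠ 0, Ax ≠ 0 } ∈ [0, π]. If A and B are invertible and φ_max(A) + φ_max(B) < π, then I + AB is nonsingular, and moreover every eigenvalue λ of AB satisfies |arg λ| ≤ φ_max(A) + φ_max(B) < π. -/

import Mathlib

open Matrix

noncomputable def phiMax {n : ℕ} (A : Matrix (Fin n) (Fin n) ℂ) : ℝ :=
  sSup {t : ℝ | ∃ x : EuclideanSpace ℂ (Fin n), x ≠ 0 ∧ Matrix.toEuclideanLin A x ≠ 0 ∧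
    t = Real.arccos ((inner ℂ x (Matrix.toEuclideanLin A x) : ℂ).re /
      (‖x‖ * ‖Matrix.toEuclideanLin A x‖))}

/-!
If `(A * B) y = c • y` with `c ≠ 0`, the angle between `y` and `c • y` is `|arg c|`, and by the
triangle inequality for angles it is at most the angle from `y` to `B y` plus the angle from
`B y` to `A (B y) = c • y`, i.e. at most `phiMax B + phiMax A`. When this is `< π`, `-1` cannot
be an eigenvalue of `A * B`, so `1 + A * B` is invertible.
-/

open InnerProductGeometry

section EuclideanSpace

variable {ι : Type*} [Fintype ι]

lemma angle_eq_arccos_re_inner (x y : EuclideanSpace ℂ ι) :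
    angle x y = Real.arccos ((inner ℂ x y).re / (‖x‖ * ‖y‖)) := by
  simp [angle, PiLp.inner_apply, Complex.inner]

lemma angle_smul_right_self {x : EuclideanSpace ℂ ι} (hx : x ≠ 0) {c : ℂ} (hc : c ≠ 0) :
    angle x (c • x) = |c.arg| := by
  have hx' : ‖x‖ ≠ 0 := norm_ne_zero_iff.mpr hx
  have hc' : ‖c‖ ≠ 0 := norm_ne_zero_iff.mpr hc
  have hcos : (inner ℂ x (c • x)).re / (‖x‖ * ‖c • x‖) = Real.cos c.arg := by
    rw [Complex.cos_arg hc, inner_smul_right, inner_self_eq_norm_sq_to_K, norm_smul]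
    field_simp
    simp [Complex.mul_re, sq, mul_comm]
  rw [angle_eq_arccos_re_inner, hcos, ← Real.cos_abs,
    Real.arccos_cos (abs_nonneg _) (Complex.abs_arg_le_pi c)]

lemma exists_toEuclideanLin_eq_smul_of_mem_spectrum [DecidableEq ι] {M : Matrix ι ι ℂ} {c : ℂ}
    (hc : c ∈ spectrum ℂ M) : ∃ y, y ≠ 0 ∧ toEuclideanLin M y = c • y := by
  rw [← spectrum_toLpLin 2, ← Module.End.hasEigenvalue_iff_mem_spectrum] at hc
  obtain ⟨y, hy⟩ := hc.exists_hasEigenvector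
  exact ⟨y, hy.2, hy.apply_eq_smul⟩

end EuclideanSpace

lemma isUnit_one_add_of_neg_one_notMem_spectrum {R A : Type*} [CommRing R] [Ring A] [Algebra R A]
    {a : A} (h : (-1 : R) ∉ spectrum R a) : IsUnit (1 + a) := by
  rwa [spectrum.notMem_iff, map_neg, map_one, ← neg_add', IsUnit.neg_iff] at h

section phiMax

variable {n : ℕ}

lemma phiMax_nonneg (A : Matrix (Fin n) (Fin n) ℂ) : 0 ≤ phiMax A :=
  Real.sSup_nonneg fun _ ⟨_, _, _, ht⟩ ↦ ht ▸ Real.arccos_nonneg _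

lemma angle_toEuclideanLin_le_phiMax (A : Matrix (Fin n) (Fin n) ℂ) {x : EuclideanSpace ℂ (Fin n)}
    (hx : x ≠ 0) (hAx : toEuclideanLin A x ≠ 0) : angle x (toEuclideanLin A x) ≤ phiMax A :=
  le_csSup ⟨Real.pi, fun _ ⟨_, _, _, ht⟩ ↦ ht ▸ Real.arccos_le_pi _⟩
    ⟨x, hx, hAx, angle_eq_arccos_re_inner x _⟩

theorem abs_arg_le_phiMax_add_phiMax {A B : Matrix (Fin n) (Fin n) ℂ} {c : ℂ}
    (hc : c ∈ spectrum ℂ (A * B)) : |c.arg| ≤ phiMax A + phiMax B := by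
  rcases eq_or_ne c 0 with rfl | hc0
  · simpa using add_nonneg (phiMax_nonneg A) (phiMax_nonneg B)
  obtain ⟨y, hy, hABy⟩ := exists_toEuclideanLin_eq_smul_of_mem_spectrum hc
  rw [toLpLin_mul_same, LinearMap.comp_apply] at hABy
  have hcy : c • y ≠ 0 := smul_ne_zero hc0 hy
  have hBy : toEuclideanLin B y ≠ 0 := fun h ↦ hcy (by rw [← hABy, h, map_zero])
  calc |c.arg| = angle y (c • y) := (angle_smul_right_self hy hc0).symm
    _ ≤ angle y (toEuclideanLin B y) + angle (toEuclideanLin B y) (c • y) :=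
      angle_le_angle_add_angle _ _ _
    _ ≤ phiMax B + phiMax A := by
      gcongr
      · exact angle_toEuclideanLin_le_phiMax B hy hBy
      · rw [← hABy]
        exact angle_toEuclideanLin_le_phiMax A hBy (hABy ▸ hcy)
    _ = phiMax A + phiMax B := add_comm _ _

end phiMax

theorem stmt19_general {n : ℕ} (A B : Matrix (Fin n) (Fin n) ℂ)
    (h : phiMax A + phiMax B < Real.pi) :
    IsUnit (1 + A * B) ∧
    ∀ lam ∈ spectrum ℂ (A * B), |Complex.arg lam| ≤ phiMax A + phiMax B := by
  refine ⟨isUnit_one_add_of_neg_one_notMem_spectrum (R := ℂ) fun hmem ↦ ?_,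
    fun _ ↦ abs_arg_le_phiMax_add_phiMax⟩
  have := abs_arg_le_phiMax_add_phiMax hmem
  rw [Complex.arg_neg_one, abs_of_pos Real.pi_pos] at this
  linarith

/-- Singular angle (SRG phase) condition: if A, B are invertible and
φ_max(A) + φ_max(B) < π, then I + AB is nonsingular and every eigenvalue λ of AB
satisfies |arg λ| ≤ φ_max(A) + φ_max(B). -/
theorem stmt19 {n : ℕ} (A B : Matrix (Fin n) (Fin n) ℂ)
    (hA : IsUnit A) (hB : IsUnit B)
    (h : phiMax A + phiMax B < Real.pi) :
    IsUnit (1 + A * B) ∧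
    ∀ lam ∈ spectrum ℂ (A * B), |Complex.arg lam| ≤ phiMax A + phiMax B :=
  stmt19_general A B h
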